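/- arXiv:2301.04240 — 2 statements merged into one kernel-verified Lean document; each statement's English description precedes it below -/
import Mathlib

section
/- Fan's trace inequality: for any two real symmetric n×n matrices X and Y, ⟨X, Y⟩ ≤ ⟨λ(X), λ(Y)⟩, where ⟨X,Y⟩ = tr(XY) and λ(·) is the eigenvalue vector in nonincreasing order. -/
/-!
Write `X = U diag(a) Uᵀ`, `Y = V diag(b) Vᵀ` and `Q = Uᵀ V`. Then `tr(XY) = ∑ᵢⱼ aᵢ bⱼ Qᵢⱼ²`, and since
`Q` is orthogonal the matrix `(Qᵢⱼ²)` is doubly stochastic. By Birkhoff's theorem it is a convex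
combination of permutation matrices, and for each permutation `σ` the rearrangement inequality gives
`∑ᵢ aᵢ b_{σ i} ≤ ∑ᵢ aᵢ bᵢ`, because `a` and `b` are both nonincreasing.
-/

open Filter Topology Set Matrix

noncomputable section

def IsEigVec {n : ℕ} (X : Matrix (Fin n) (Fin n) ℝ) (a : Fin n → ℝ) : Prop :=
  (∀ i j : Fin n, i ≤ j → a j ≤ a i) ∧
    ∃ U : Matrix (Fin n) (Fin n) ℝ, U * Uᵀ = 1 ∧ X = U * Matrix.diagonal a * Uᵀ

def vnorm {n : ℕ} (x : Fin n → ℝ) : ℝ := Real.sqrt (∑ i, (x i) ^ 2)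

def fnorm {n : ℕ} (A : Matrix (Fin n) (Fin n) ℝ) : ℝ := Real.sqrt (∑ i, ∑ j, (A i j) ^ 2)

def mInner {n : ℕ} (A B : Matrix (Fin n) (Fin n) ℝ) : ℝ := Matrix.trace (A * B)

def subderiv {E : Type*} [AddCommGroup E] [Module ℝ E] [TopologicalSpace E]
    (f : E → EReal) (x w : E) : EReal :=
  Filter.liminf (fun p : ℝ × E => (((p.1)⁻¹ : ℝ) : EReal) * (f (x + p.1 • p.2) - f x))
    ((nhdsWithin (0 : ℝ) (Set.Ioi 0)) ×ˢ nhds w)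

def subderiv2With {E : Type*} [AddCommGroup E] [Module ℝ E] [TopologicalSpace E]
    (ip : E → E → ℝ) (f : E → EReal) (x v w : E) : EReal :=
  Filter.liminf (fun p : ℝ × E =>
      ((2 / p.1 ^ 2 : ℝ) : EReal) * (f (x + p.1 • p.2) - f x - ((p.1 * ip v p.2 : ℝ) : EReal)))
    ((nhdsWithin (0 : ℝ) (Set.Ioi 0)) ×ˢ nhds w)

def parabSubderiv {E : Type*} [AddCommGroup E] [Module ℝ E] [TopologicalSpace E]
    (f : E → EReal) (x w : E) (dfw : ℝ) (z : E) : EReal :=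
  Filter.liminf (fun p : ℝ × E =>
      ((2 / p.1 ^ 2 : ℝ) : EReal) *
        (f (x + p.1 • w + (p.1 ^ 2 / 2) • p.2) - f x - ((p.1 * dfw : ℝ) : EReal)))
    ((nhdsWithin (0 : ℝ) (Set.Ioi 0)) ×ˢ nhds z)

def tcone {E : Type*} [AddCommGroup E] [Module ℝ E] [TopologicalSpace E]
    (C : Set E) (x : E) : Set E :=
  {w | ∃ (t : ℕ → ℝ) (v : ℕ → E), (∀ k, 0 < t k) ∧ Filter.Tendsto t Filter.atTop (nhds 0) ∧
      Filter.Tendsto v Filter.atTop (nhds w) ∧ ∀ k, x + t k • v k ∈ C}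

def tcone2 {E : Type*} [AddCommGroup E] [Module ℝ E] [TopologicalSpace E]
    (C : Set E) (x w : E) : Set E :=
  {u | ∃ (t : ℕ → ℝ) (v : ℕ → E), (∀ k, 0 < t k) ∧ Filter.Tendsto t Filter.atTop (nhds 0) ∧
      Filter.Tendsto v Filter.atTop (nhds u) ∧ ∀ k, x + t k • w + (t k ^ 2 / 2) • v k ∈ C}


namespace Matrix

variable {ι R : Type*} [Fintype ι] [DecidableEq ι]

theorem Monovary.dotProduct_mulVec_le_of_mem_doublyStochastic [Field R] [LinearOrder R]
    [IsStrictOrderedRing R] {a b : ι → R} (hab : Monovary a b) {S : Matrix ι ι R}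
    (hS : S ∈ doublyStochastic R ι) : a ⬝ᵥ S *ᵥ b ≤ a ⬝ᵥ b := by
  obtain ⟨w, hw_nonneg, hw_sum, rfl⟩ := exists_eq_sum_perm_of_mem_doublyStochastic hS
  calc a ⬝ᵥ (∑ σ, w σ • σ.permMatrix R) *ᵥ b
      = ∑ σ, w σ * (a ⬝ᵥ b ∘ σ) := by
        simp only [sum_mulVec, smul_mulVec, permMatrix_mulVec, dotProduct_sum, dotProduct_smul,
          smul_eq_mul]
    _ ≤ ∑ σ, w σ * (a ⬝ᵥ b) :=
        Finset.sum_le_sum fun σ _ =>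
          mul_le_mul_of_nonneg_left hab.sum_smul_comp_perm_le_sum_smul (hw_nonneg σ)
    _ = a ⬝ᵥ b := by rw [← Finset.sum_mul, hw_sum, one_mul]

theorem hadamard_self_mem_doublyStochastic [CommRing R] [LinearOrder R] [IsStrictOrderedRing R]
    {Q : Matrix ι ι R} (hQ : Q ∈ orthogonalGroup ι R) : Q ⊙ Q ∈ doublyStochastic R ι := by
  have hrow := congr_fun₂ ((mem_orthogonalGroup_iff ι R).1 hQ)
  have hcol := congr_fun₂ ((mem_orthogonalGroup_iff' ι R).1 hQ)
  refine mem_doublyStochastic_iff_sum.2 ⟨fun i j => mul_self_nonneg _, fun i => ?_, fun j => ?_⟩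
  · simpa [mul_apply] using hrow i i
  · simpa [mul_apply] using hcol j j

theorem transpose_mul_mem_orthogonalGroup [CommRing R] {U V : Matrix ι ι R}
    (hU : U ∈ orthogonalGroup ι R) (hV : V ∈ orthogonalGroup ι R) :
    Uᵀ * V ∈ orthogonalGroup ι R := by
  rw [mem_orthogonalGroup_iff] at hV ⊢
  rw [transpose_mul, transpose_transpose, Matrix.mul_assoc, ← Matrix.mul_assoc V, hV,
    Matrix.one_mul, (mem_orthogonalGroup_iff' ι R).1 hU]

theorem trace_conj_diagonal_mul_conj_diagonal [CommRing R] (U V : Matrix ι ι R) (a b : ι → R) :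
    trace (U * diagonal a * Uᵀ * (V * diagonal b * Vᵀ)) =
      a ⬝ᵥ ((Uᵀ * V) ⊙ (Uᵀ * V)) *ᵥ b := by
  rw [dotProduct_mulVec, dotProduct_vecMul_hadamard, transpose_mul, transpose_mul,
    diagonal_transpose, transpose_transpose]
  simp only [Matrix.mul_assoc]
  rw [trace_mul_comm U]
  simp only [Matrix.mul_assoc]

end Matrix

theorem fan_trace_inequality_general {n : ℕ} (X Y : Matrix (Fin n) (Fin n) ℝ)
    (a b : Fin n → ℝ)
    (ha : IsEigVec X a) (hb : IsEigVec Y b) :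
    mInner X Y ≤ ∑ i, a i * b i := by
  obtain ⟨ha_anti, U, hU, rfl⟩ := ha
  obtain ⟨hb_anti, V, hV, rfl⟩ := hb
  have hQ : Uᵀ * V ∈ orthogonalGroup (Fin n) ℝ :=
    transpose_mul_mem_orthogonalGroup ((mem_orthogonalGroup_iff _ _).2 hU)
      ((mem_orthogonalGroup_iff _ _).2 hV)
  rw [mInner, trace_conj_diagonal_mul_conj_diagonal]
  exact (Antitone.monovary ha_anti hb_anti).dotProduct_mulVec_le_of_mem_doublyStochastic
    (hadamard_self_mem_doublyStochastic hQ)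

/-- Fan's trace inequality ⟨X,Y⟩ = tr(XY) ≤ ⟨λ(X),λ(Y)⟩. -/
theorem fan_trace_inequality {n : ℕ} (X Y : Matrix (Fin n) (Fin n) ℝ)
    (hX : X.IsSymm) (hY : Y.IsSymm) (a b : Fin n → ℝ)
    (ha : IsEigVec X a) (hb : IsEigVec Y b) :
    mInner X Y ≤ ∑ i, a i * b i :=
  fan_trace_inequality_general X Y a b ha hb
end
end

section
/- Let X ∈ Sⁿ₋ (negative semidefinite) with largest eigenvalue μ₁ = 0, and let U be an orthogonal matrix diagonalizing X with ordered eigenvalues, α₁ the index set of eigenvalues equal to 0. Then the tangent cone to Sⁿ₋ at X is T_{Sⁿ₋}(X) = {H ∈ Sⁿ : λ₁(U_{α₁}ᵀ H U_{α₁}) ≤ 0}, i.e. H is tangent iff the compression of H to the null space of X is negative semidefinite. -/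
/-!
Conjugating by `U` reduces everything to `X = diagonal a` with `a ≤ 0`, the kernel of `X` being
spanned by the coordinates where `a` vanishes. Every `M - X` with `M ∈ Sⁿ₋` is symmetric and
nonpositive on the kernel, and these properties cut out a closed cone, which therefore contains
the tangent cone. Conversely, if `B` is symmetric and nonpositive on the kernel, then for each
`ε > 0` the matrix `diagonal a + t (B - ε I)` is negative semidefinite for small `t > 0`: on the
kernel `B - ε I` is negative definite, off the kernel the entries `a i ≤ -d < 0` dominate, and
the cross terms are absorbed by AM-GM. Letting `ε → 0` recovers `B` as a tangent direction.
-/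

open Filter Topology Set Matrix

noncomputable section

/-- The cone of real symmetric negative semidefinite n×n matrices. -/
def Sneg (n : ℕ) : Set (Matrix (Fin n) (Fin n) ℝ) :=
  {M | M.IsSymm ∧ ∀ v : Fin n → ℝ, v ⬝ᵥ M.mulVec v ≤ 0}

section TangentCone

variable {E F : Type*} [AddCommGroup E] [Module ℝ E] [TopologicalSpace E]
  [AddCommGroup F] [Module ℝ F] [TopologicalSpace F]

lemma tcone_subset_of_isClosed {C K : Set E} {x : E} (hK : IsClosed K)
    (hsmul : ∀ t : ℝ, 0 < t → ∀ v, t • v ∈ K → v ∈ K) (hCK : ∀ c ∈ C, c - x ∈ K) :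
    tcone C x ⊆ K := by
  rintro w ⟨t, v, ht, -, hv, hmem⟩
  refine hK.mem_of_tendsto hv (Eventually.of_forall fun k => hsmul _ (ht k) _ ?_)
  simpa using hCK _ (hmem k)

lemma mem_tcone_of_tendsto {C : Set E} {x w : E} {v : ℕ → E} (hv : Tendsto v atTop (𝓝 w))
    (hfeas : ∀ k, ∀ᶠ t in 𝓝[>] (0 : ℝ), x + t • v k ∈ C) : w ∈ tcone C x := by
  have hstep : ∀ k : ℕ, ∃ t, x + t • v k ∈ C ∧ t ∈ Ioo 0 (1 / ((k : ℝ) + 1)) :=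
    fun k => ((hfeas k).and (Ioo_mem_nhdsGT (by positivity))).exists
  choose t hmem ht using hstep
  exact ⟨t, v, fun k => (ht k).1, squeeze_zero (fun k => (ht k).1.le) (fun k => (ht k).2.le)
    tendsto_one_div_add_atTop_nhds_zero_nat, hv, hmem⟩

lemma map_mem_tcone (L : E →ₗ[ℝ] F) (hL : Continuous L) {C : Set E} {D : Set F}
    (hCD : MapsTo L C D) {x w : E} (hw : w ∈ tcone C x) : L w ∈ tcone D (L x) := by
  obtain ⟨t, v, ht, ht0, hv, hmem⟩ := hw
  refine ⟨t, fun k => L (v k), ht, ht0, (hL.tendsto w).comp hv, fun k => ?_⟩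
  simpa using hCD (hmem k)

end TangentCone

lemma Matrix.IsSymm.mul_mul_transpose {m n α : Type*} [Fintype n] [CommSemiring α]
    {A : Matrix n n α} (hA : A.IsSymm) (P : Matrix m n α) : (P * A * Pᵀ).IsSymm := by
  simp [IsSymm, Matrix.transpose_mul, hA.eq, Matrix.mul_assoc]

lemma mul_mul_transpose_mul_mul_transpose {ι R : Type*} [Fintype ι] [DecidableEq ι] [Semiring R]
    {U : Matrix ι ι R} (hU : U * Uᵀ = 1) (H : Matrix ι ι R) : U * (Uᵀ * H * U) * Uᵀ = H := by
  rw [← Matrix.mul_assoc, ← Matrix.mul_assoc, hU, Matrix.one_mul, Matrix.mul_assoc, hU,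
    Matrix.mul_one]

lemma isSymm_transpose_mul_mul_iff {ι R : Type*} [Fintype ι] [DecidableEq ι] [CommSemiring R]
    {U : Matrix ι ι R} (hU : U * Uᵀ = 1) {H : Matrix ι ι R} : (Uᵀ * H * U).IsSymm ↔ H.IsSymm := by
  refine ⟨fun h => ?_, fun h => by simpa using h.mul_mul_transpose Uᵀ⟩
  simpa [mul_mul_transpose_mul_mul_transpose hU] using h.mul_mul_transpose U

lemma mul_mul_transpose_mem_Sneg {n : ℕ} (P : Matrix (Fin n) (Fin n) ℝ)
    {M : Matrix (Fin n) (Fin n) ℝ} (hM : M ∈ Sneg n) : P * M * Pᵀ ∈ Sneg n := by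
  refine ⟨hM.1.mul_mul_transpose P, fun v => ?_⟩
  rw [← mulVec_mulVec, ← mulVec_mulVec, dotProduct_mulVec, ← mulVec_transpose]
  exact hM.2 (Pᵀ *ᵥ v)

lemma nonpos_of_diagonal_mem_Sneg {n : ℕ} {a : Fin n → ℝ} (ha : diagonal a ∈ Sneg n) (i : Fin n) :
    a i ≤ 0 := by
  simpa using ha.2 (Pi.single i 1)

lemma mul_mul_transpose_mem_tcone_Sneg {n : ℕ} (P : Matrix (Fin n) (Fin n) ℝ)
    {X H : Matrix (Fin n) (Fin n) ℝ} (hH : H ∈ tcone (Sneg n) X) : P * H * Pᵀ ∈ tcone (Sneg n) (P * X * Pᵀ) := by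
  simpa [Matrix.mul_assoc] using map_mem_tcone (LinearMap.mulLeft ℝ P ∘ₗ LinearMap.mulRight ℝ Pᵀ)
    (LinearMap.continuous_of_finiteDimensional _)
    (fun M hM => by simpa [Matrix.mul_assoc] using mul_mul_transpose_mem_Sneg P hM) hH

lemma transpose_mul_mul_mem_tcone_Sneg_iff {n : ℕ} {U : Matrix (Fin n) (Fin n) ℝ}
    (hU : U * Uᵀ = 1) {X H : Matrix (Fin n) (Fin n) ℝ} :
    Uᵀ * H * U ∈ tcone (Sneg n) (Uᵀ * X * U) ↔ H ∈ tcone (Sneg n) X := by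
  refine ⟨fun h => ?_, fun h => by simpa using mul_mul_transpose_mem_tcone_Sneg Uᵀ h⟩
  simpa only [mul_mul_transpose_mul_mul_transpose hU] using mul_mul_transpose_mem_tcone_Sneg U h

section QuadraticEstimates

variable {ι : Type*} [Fintype ι]

lemma abs_dotProduct_mulVec_le (B : Matrix ι ι ℝ) (u w : ι → ℝ) :
    |u ⬝ᵥ B *ᵥ w| ≤ (∑ i, ∑ j, |B i j|) * (‖u‖ * ‖w‖) := by
  have hterm : ∀ i j, |u i * (B i j * w j)| ≤ |B i j| * (‖u‖ * ‖w‖) := fun i j => by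
    rw [abs_mul, abs_mul, mul_left_comm]
    exact mul_le_mul_of_nonneg_left (mul_le_mul (norm_le_pi_norm u i) (norm_le_pi_norm w j)
      (abs_nonneg _) (norm_nonneg _)) (abs_nonneg _)
  simp only [dotProduct, mulVec, Finset.mul_sum, Finset.sum_mul]
  refine (Finset.abs_sum_le_sum_abs _ _).trans (Finset.sum_le_sum fun i _ => ?_)
  exact (Finset.abs_sum_le_sum_abs _ _).trans (Finset.sum_le_sum fun j _ => hterm i j)

lemma sq_norm_le_dotProduct_self (u : ι → ℝ) : ‖u‖ ^ 2 ≤ u ⬝ᵥ u := by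
  have hnorm : ‖u‖ ≤ √(u ⬝ᵥ u) := (pi_norm_le_iff_of_nonneg (Real.sqrt_nonneg _)).2 fun i =>
    Real.le_sqrt_of_sq_le (by
      simpa [dotProduct, sq] using Finset.single_le_sum (fun j _ => mul_self_nonneg (u j))
        (Finset.mem_univ i))
  calc ‖u‖ ^ 2 ≤ √(u ⬝ᵥ u) ^ 2 := pow_le_pow_left₀ (norm_nonneg u) hnorm 2
    _ = u ⬝ᵥ u := Real.sq_sqrt (Finset.sum_nonneg fun i _ => mul_self_nonneg (u i))

lemma dotProduct_diagonal_add_smul_mulVec_nonpos [DecidableEq ι] {a : ι → ℝ} {B : Matrix ι ι ℝ}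
    {d ε t : ℝ} (hd : 0 ≤ d) (ha : ∀ i, a i ≠ 0 → a i ≤ -d)
    (hB : ∀ x : ι → ℝ, (∀ i, a i ≠ 0 → x i = 0) → x ⬝ᵥ B *ᵥ x ≤ 0) (hε : 0 < ε) (ht : 0 ≤ t)
    (htd : t * ((∑ i, ∑ j, |B i j|) + (∑ i, ∑ j, |B i j|) ^ 2 / ε) ≤ d) (z : ι → ℝ) :
    z ⬝ᵥ (diagonal a + t • (B - ε • 1)) *ᵥ z ≤ 0 := by
  set c := ∑ i, ∑ j, |B i j|
  set x : ι → ℝ := fun i => if a i = 0 then z i else 0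
  set y := z - x
  have hdiag : z ⬝ᵥ diagonal a *ᵥ z ≤ -d * (y ⬝ᵥ y) := by
    simp only [dotProduct, mulVec_diagonal, Finset.mul_sum]
    refine Finset.sum_le_sum fun i _ => ?_
    by_cases hi : a i = 0
    · simp [y, x, hi]
    · simp only [y, x, hi, Pi.sub_apply, if_false, sub_zero]
      nlinarith [ha i hi, mul_self_nonneg (z i)]
  have hxz : x ⬝ᵥ x ≤ z ⬝ᵥ z := Finset.sum_le_sum fun i _ => by
    by_cases hi : a i = 0 <;> simp [x, hi, mul_self_nonneg]
  have hBz : z ⬝ᵥ B *ᵥ z = x ⬝ᵥ B *ᵥ x + x ⬝ᵥ B *ᵥ y + y ⬝ᵥ B *ᵥ x + y ⬝ᵥ B *ᵥ y := by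
    rw [← add_sub_cancel x z]
    simp only [mulVec_add, dotProduct_add, add_dotProduct, y]
    ring
  have hxx : x ⬝ᵥ B *ᵥ x ≤ 0 := hB x fun i hi => if_neg hi
  have hxy : x ⬝ᵥ B *ᵥ y ≤ c * (‖x‖ * ‖y‖) := (abs_le.1 (abs_dotProduct_mulVec_le B x y)).2
  have hyx : y ⬝ᵥ B *ᵥ x ≤ c * (‖y‖ * ‖x‖) := (abs_le.1 (abs_dotProduct_mulVec_le B y x)).2
  have hyy : y ⬝ᵥ B *ᵥ y ≤ c * (‖y‖ * ‖y‖) := (abs_le.1 (abs_dotProduct_mulVec_le B y y)).2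
  have hnx := sq_norm_le_dotProduct_self x
  have hny := sq_norm_le_dotProduct_self y
  have hc : 0 ≤ c := Finset.sum_nonneg fun i _ => Finset.sum_nonneg fun j _ => abs_nonneg _
  -- AM-GM trades the cross terms for the `-ε ‖x‖²` of the kernel block and a `c² / ε ‖y‖²`
  -- that the gap `-d` of the diagonal absorbs once `t` is small
  have hamgm : 2 * c * ‖x‖ * ‖y‖ - ε * ‖x‖ ^ 2 ≤ c ^ 2 / ε * ‖y‖ ^ 2 := by
    rw [div_mul_eq_mul_div, le_div_iff₀ hε]
    nlinarith [sq_nonneg (ε * ‖x‖ - c * ‖y‖)]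
  simp only [add_mulVec, sub_mulVec, smul_mulVec, one_mulVec, dotProduct_add, dotProduct_sub,
    dotProduct_smul, smul_eq_mul, hBz]
  calc z ⬝ᵥ diagonal a *ᵥ z + t * (x ⬝ᵥ B *ᵥ x + x ⬝ᵥ B *ᵥ y + y ⬝ᵥ B *ᵥ x + y ⬝ᵥ B *ᵥ y
        - ε * (z ⬝ᵥ z))
      ≤ -d * ‖y‖ ^ 2 + t * (2 * c * ‖x‖ * ‖y‖ - ε * ‖x‖ ^ 2 + c * ‖y‖ ^ 2) := by
        gcongr ?_ + t * ?_
        · nlinarith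
        · nlinarith
    _ ≤ -d * ‖y‖ ^ 2 + t * (c + c ^ 2 / ε) * ‖y‖ ^ 2 := by nlinarith
    _ ≤ 0 := by nlinarith [sq_nonneg ‖y‖]

end QuadraticEstimates

lemma exists_pos_forall_ne_zero_le_neg {ι : Type*} [Finite ι] (a : ι → ℝ) (ha : ∀ i, a i ≤ 0) :
    ∃ d > 0, ∀ i, a i ≠ 0 → a i ≤ -d := by
  have hev : ∀ᶠ d in 𝓝[>] (0 : ℝ), ∀ i, a i ≠ 0 → a i ≤ -d := eventually_all.2 fun i => by
    by_cases hi : a i = 0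
    · exact Eventually.of_forall fun _ h => absurd hi h
    · filter_upwards [nhdsWithin_le_nhds (eventually_le_nhds
        (neg_pos.2 (lt_of_le_of_ne (ha i) hi)))] with d hd _
      linarith
  exact (hev.and self_mem_nhdsWithin).exists.imp fun d hd => ⟨hd.2, hd.1⟩

lemma dotProduct_mulVec_eq_sum_subtype {ι R : Type*} [Fintype ι] [CommSemiring R] {p : ι → Prop}
    [DecidablePred p] (M : Matrix ι ι R) {x : ι → R} (hx : ∀ i, ¬ p i → x i = 0) :
    x ⬝ᵥ M *ᵥ x = ∑ i : {i // p i}, ∑ j : {j // p j}, x i * M i j * x j := by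
  simp only [dotProduct, mulVec, Finset.mul_sum, ← mul_assoc]
  refine Finset.sum_congr_set {i | p i} _ _ (fun i _ => Finset.sum_congr_set {j | p j} _ _
    (fun _ _ => rfl) fun j hj => by simp [hx j hj]) fun i hi => by simp [hx i hi]

lemma forall_sum_subtype_nonpos_iff {ι : Type*} [Fintype ι] (p : ι → Prop) [DecidablePred p]
    (M : Matrix ι ι ℝ) :
    (∀ v : {i // p i} → ℝ, ∑ i, ∑ j, v i * M i.1 j.1 * v j ≤ 0) ↔
      ∀ x : ι → ℝ, (∀ i, ¬ p i → x i = 0) → x ⬝ᵥ M *ᵥ x ≤ 0 := by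
  refine ⟨fun h x hx => (dotProduct_mulVec_eq_sum_subtype M hx).trans_le (h _), fun h v => ?_⟩
  have hext := h (fun i => if hi : p i then v ⟨i, hi⟩ else 0) fun i hi => dif_neg hi
  rw [dotProduct_mulVec_eq_sum_subtype (x := fun i => if hi : p i then v ⟨i, hi⟩ else 0) M
    fun i hi => dif_neg hi] at hext
  refine (Finset.sum_congr rfl fun i _ => Finset.sum_congr rfl fun j _ => ?_).trans_le hext
  simp [i.2, j.2]

lemma eventually_diagonal_add_smul_mem_Sneg {n : ℕ} {a : Fin n → ℝ} (ha : ∀ i, a i ≤ 0)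
    {B : Matrix (Fin n) (Fin n) ℝ} (hBsymm : B.IsSymm)
    (hB : ∀ x : Fin n → ℝ, (∀ i, a i ≠ 0 → x i = 0) → x ⬝ᵥ B *ᵥ x ≤ 0) {ε : ℝ} (hε : 0 < ε) :
    ∀ᶠ t in 𝓝[>] (0 : ℝ), diagonal a + t • (B - ε • 1) ∈ Sneg n := by
  obtain ⟨d, hd, had⟩ := exists_pos_forall_ne_zero_le_neg a ha
  set K := (∑ i, ∑ j, |B i j|) + (∑ i, ∑ j, |B i j|) ^ 2 / ε
  have hK : 0 ≤ K := by positivity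
  filter_upwards [Ioo_mem_nhdsGT (show 0 < d / (K + 1) by positivity)] with t ht
  refine ⟨(isSymm_diagonal a).add ((hBsymm.sub (isSymm_one.smul ε)).smul t),
    dotProduct_diagonal_add_smul_mulVec_nonpos hd.le had hB hε ht.1.le ?_⟩
  calc t * K ≤ t * (K + 1) := by nlinarith [ht.1]
    _ ≤ d := ((lt_div_iff₀ (by positivity)).1 ht.2).le

theorem tcone_Sneg_diagonal {n : ℕ} {a : Fin n → ℝ} (ha : ∀ i, a i ≤ 0) :
    tcone (Sneg n) (diagonal a) =
      {B | B.IsSymm ∧ ∀ x : Fin n → ℝ, (∀ i, a i ≠ 0 → x i = 0) → x ⬝ᵥ B *ᵥ x ≤ 0} := by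
  refine Subset.antisymm (tcone_subset_of_isClosed ?closed ?cone fun M hM => ?translate) ?approx
  case closed =>
    simp only [ofPred_and, ofPred_forall]
    exact (isClosed_eq continuous_id.matrix_transpose continuous_id).inter <|
      isClosed_iInter fun x => isClosed_iInter fun _ => isClosed_le (by fun_prop) continuous_const
  case cone =>
    rintro t ht B ⟨hsymm, hneg⟩
    refine ⟨IsSymm.ext fun i j => mul_left_cancel₀ ht.ne' (hsymm.apply i j), fun x hx => ?_⟩
    have htB := hneg x hx
    rw [smul_mulVec, dotProduct_smul, smul_eq_mul] at htB
    exact nonpos_of_mul_nonpos_right htB ht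
  case translate =>
    refine ⟨hM.1.sub (isSymm_diagonal a), fun x hx => ?_⟩
    have hdiag : x ⬝ᵥ diagonal a *ᵥ x = 0 := Finset.sum_eq_zero fun i _ => by
      by_cases hi : a i = 0 <;> simp [mulVec_diagonal, hi, hx i]
    rw [sub_mulVec, dotProduct_sub, hdiag, sub_zero]
    exact hM.2 x
  case approx =>
    rintro B ⟨hsymm, hneg⟩
    refine mem_tcone_of_tendsto (v := fun k => B - (1 / ((k : ℝ) + 1)) • 1) ?_
      fun k => eventually_diagonal_add_smul_mem_Sneg ha hsymm hneg (by positivity)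
    simpa using tendsto_const_nhds.sub
      ((tendsto_one_div_add_atTop_nhds_zero_nat (𝕜 := ℝ)).smul_const (1 : Matrix (Fin n) (Fin n) ℝ))

theorem tangent_cone_Sneg_general {n : ℕ}
    (X U : Matrix (Fin n) (Fin n) ℝ) (a : Fin n → ℝ)
    (hU : U * Uᵀ = 1) (hXU : X = U * Matrix.diagonal a * Uᵀ)
    (hXneg : X ∈ Sneg n) :
    tcone (Sneg n) X =
      {H | H.IsSymm ∧ ∀ v : {i : Fin n // a i = 0} → ℝ,
        ∑ i, ∑ j, v i * (Uᵀ * H * U) i.1 j.1 * v j ≤ 0} := by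
  have hUX : Uᵀ * X * U = diagonal a := by
    rw [hXU]
    simpa only [transpose_transpose] using mul_mul_transpose_mul_mul_transpose (U := Uᵀ)
      (by rwa [transpose_transpose, mul_eq_one_comm]) (diagonal a)
  have ha : ∀ i, a i ≤ 0 := nonpos_of_diagonal_mem_Sneg (by
    simpa only [transpose_transpose, hUX] using mul_mul_transpose_mem_Sneg Uᵀ hXneg)
  ext H
  rw [← transpose_mul_mul_mem_tcone_Sneg_iff hU, hUX, tcone_Sneg_diagonal ha]
  exact and_congr (isSymm_transpose_mul_mul_iff hU) (forall_sum_subtype_nonpos_iff _ _).symm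

/-- tangent cone to Sⁿ₋ at X with μ₁ = 0: H is tangent iff H is symmetric
and the compression of H to the null space of X (the block U_{α₁}ᵀ H U_{α₁}) is negative
semidefinite. -/
theorem tangent_cone_Sneg {n : ℕ} (hn : 0 < n)
    (X U : Matrix (Fin n) (Fin n) ℝ) (a : Fin n → ℝ)
    (hord : ∀ i j : Fin n, i ≤ j → a j ≤ a i)
    (hU : U * Uᵀ = 1) (hXU : X = U * Matrix.diagonal a * Uᵀ)
    (hXneg : X ∈ Sneg n)
    (hmax : a ⟨0, hn⟩ = 0) :
    tcone (Sneg n) X =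
      {H | H.IsSymm ∧ ∀ v : {i : Fin n // a i = 0} → ℝ,
        ∑ i, ∑ j, v i * (Uᵀ * H * U) i.1 j.1 * v j ≤ 0} :=
  tangent_cone_Sneg_general X U a hU hXU hXneg
end
end
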